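/- Let L and L' be k-deductive systems over the same signature Σ. Then the following are equivalent: (i) L ⇝ L', i.e. Γ ⊢_L φ implies Γ ⊢_{L'} φ for all Γ, φ; (ii) Mod(L') ⊆ Mod(L), where Mod ranges over all k-structures over Σ whose carrier lies in a fixed universe containing the set Fm_Σ of Σ-terms. -/

import Mathlib

open FirstOrder

/-- A single-sorted algebraic signature, i.e. a first-order language
(used with no relation symbols). -/
abbrev Signature : Type 1 := FirstOrder.Language.{0,0}

/-- A `k`-formula over `L`: a `k`-tuple of terms with variables in `ℕ`. -/
abbrev KFm (L : Signature) (k : ℕ) : Type := Fin k → L.Term ℕ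

/-- Application of a substitution (an endomorphism of the term algebra,
given by its action on variables) to a `k`-formula, componentwise. -/
def substK {L : Signature} {k : ℕ} (σ : ℕ → L.Term ℕ) (φ : KFm L k) : KFm L k :=
  fun i => (φ i).subst σ

/-- A `k`-dimensional deductive system over the signature `L`. -/
structure DedSys (L : Signature) (k : ℕ) : Type 1 where
  turn : Set (KFm L k) → KFm L k → Prop
  mem_turn : ∀ (Γ : Set (KFm L k)) (γ : KFm L k), γ ∈ Γ → turn Γ γ
  cut : ∀ (Γ Δ : Set (KFm L k)) (φ : KFm L k),
    turn Γ φ → (∀ γ ∈ Γ, turn Δ γ) → turn Δ φ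
  subst_invariant : ∀ (Γ : Set (KFm L k)) (φ : KFm L k) (σ : ℕ → L.Term ℕ),
    turn Γ φ → turn (substK σ '' Γ) (substK σ φ)

/-- The extension of a `(k,l)`-translation to sets of `k`-formulas. -/
def trSet {L L' : Signature} {k l : ℕ} (τ : KFm L k → Finset (KFm L' l))
    (Γ : Set (KFm L k)) : Set (KFm L' l) :=
  ⋃ φ ∈ Γ, ↑(τ φ)

/-- `τ` interprets the `k`-deductive system `D` in the `l`-deductive system `D'`. -/
def DInterpretsIn {L L' : Signature} {k l : ℕ} (τ : KFm L k → Finset (KFm L' l))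
    (D : DedSys L k) (D' : DedSys L' l) : Prop :=
  ∀ (Γ : Set (KFm L k)) (φ : KFm L k),
    D.turn Γ φ ↔ ∀ ψ ∈ τ φ, D'.turn (trSet τ Γ) ψ

/-- `τ` interprets the `k`-deductive system `D`. -/
def DInterprets {L L' : Signature} {k l : ℕ} (τ : KFm L k → Finset (KFm L' l))
    (D : DedSys L k) : Prop :=
  ∃ D' : DedSys L' l, DInterpretsIn τ D D'

/-- `D'` refines `D` via the translation `τ`. -/
def DRefines {L L' : Signature} {k l : ℕ} (τ : KFm L k → Finset (KFm L' l))
    (D : DedSys L k) (D' : DedSys L' l) : Prop :=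
  ∀ (Γ : Set (KFm L k)) (φ : KFm L k),
    D.turn Γ φ → ∀ ψ ∈ τ φ, D'.turn (trSet τ Γ) ψ

/-- The composite of two translations: `(ρ∘τ)(φ) = ⋃_{ψ ∈ τ(φ)} ρ(ψ)`. -/
noncomputable def trComp {L L' L'' : Signature} {k l m : ℕ}
    (τ : KFm L k → Finset (KFm L' l)) (ρ : KFm L' l → Finset (KFm L'' m))
    (φ : KFm L k) : Finset (KFm L'' m) :=
  letI := Classical.decEq (KFm L'' m)
  (τ φ).biUnion ρ

/-- A `k`-structure over `L`: an algebra (with nonempty carrier in a fixed universe)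
together with a filter of designated `k`-tuples. -/
structure KStr (L : Signature) (k : ℕ) : Type 1 where
  carrier : Type
  [str : L.Structure carrier]
  [nonempty : Nonempty carrier]
  filter : Set (Fin k → carrier)

attribute [instance] KStr.str KStr.nonempty

/-- An assignment satisfies a `k`-formula in a `k`-structure when the tuple of values
belongs to the filter. -/
def KStr.holds {L : Signature} {k : ℕ} (A : KStr L k) (h : ℕ → A.carrier)
    (φ : KFm L k) : Prop :=
  (fun i => (φ i).realize h) ∈ A.filter

/-- Semantic consequence in a `k`-structure. -/
def KStr.Sat {L : Signature} {k : ℕ} (A : KStr L k) (Γ : Set (KFm L k))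
    (φ : KFm L k) : Prop :=
  ∀ h : ℕ → A.carrier, (∀ ψ ∈ Γ, A.holds h ψ) → A.holds h φ

/-- A `k`-structure is a model of a `k`-deductive system. -/
def IsKModel {L : Signature} {k : ℕ} (D : DedSys L k) (A : KStr L k) : Prop :=
  ∀ (Γ : Set (KFm L k)) (φ : KFm L k), D.turn Γ φ → A.Sat Γ φ

/-- The class of all models of a `k`-deductive system. -/
def KMod {L : Signature} {k : ℕ} (D : DedSys L k) : Set (KStr L k) :=
  {A | IsKModel D A}

/-- Semantic consequence over a class of `k`-structures. -/
def SemCons {L : Signature} {k : ℕ} (M : Set (KStr L k)) (Γ : Set (KFm L k))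
    (φ : KFm L k) : Prop :=
  ∀ A ∈ M, A.Sat Γ φ

/-- An `l`-structure over `L'` is a `τ`-model of the `k`-deductive system `D`. -/
def IsTauKModel {L L' : Signature} {k l : ℕ} (τ : KFm L k → Finset (KFm L' l))
    (D : DedSys L k) (A : KStr L' l) : Prop :=
  ∀ (Γ : Set (KFm L k)) (φ : KFm L k),
    D.turn Γ φ → ∀ ψ ∈ τ φ, A.Sat (trSet τ Γ) ψ

/-- The class of all `τ`-models of `D`. -/
def ModTauK {L L' : Signature} {k l : ℕ} (τ : KFm L k → Finset (KFm L' l))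
    (D : DedSys L k) : Set (KStr L' l) :=
  {A | IsTauKModel τ D A}

/-- An algebra for the signature `L`: a structure with nonempty carrier. -/
structure Alg (L : Signature) : Type 1 where
  carrier : Type
  [str : L.Structure carrier]
  [nonempty : Nonempty carrier]

attribute [instance] Alg.str Alg.nonempty

/-- Equational consequence determined by a class of algebras, on `2`-formulas
`⟨t, t'⟩` read as equations `t ≈ t'`. -/
def EqCons {L : Signature} (K : Set (Alg L)) (Γ : Set (KFm L 2)) (e : KFm L 2) : Prop :=
  ∀ A ∈ K, ∀ h : ℕ → A.carrier,
    (∀ γ ∈ Γ, (γ 0).realize h = (γ 1).realize h) → (e 0).realize h = (e 1).realize h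

/-- `K` is a `τ`-algebraic semantics of the `k`-deductive system `D`:
`τ` interprets `D` in the equational consequence `⊨_K`. -/
def IsAlgSem {L L' : Signature} {k : ℕ} (τ : KFm L k → Finset (KFm L' 2))
    (D : DedSys L k) (K : Set (Alg L')) : Prop :=
  ∀ (Γ : Set (KFm L k)) (φ : KFm L k),
    D.turn Γ φ ↔ ∀ e ∈ τ φ, EqCons K (trSet τ Γ) e

/-- `K^τ_L`: the class of algebras `A` such that `⟨A, Δ_A⟩` (identity filter)
is a `τ`-model of `D`. -/
def KTau {L L' : Signature} {k : ℕ} (τ : KFm L k → Finset (KFm L' 2))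
    (D : DedSys L k) : Set (Alg L') :=
  {A | ∀ (Γ : Set (KFm L k)) (φ : KFm L k),
    D.turn Γ φ → ∀ e ∈ τ φ, EqCons {A} (trSet τ Γ) e}

/-- The theories of a `k`-deductive system: sets of `k`-formulas closed under
its consequence relation. -/
def Theories {L : Signature} {k : ℕ} (D : DedSys L k) : Set (Set (KFm L k)) :=
  {T | ∀ φ : KFm L k, D.turn T φ → φ ∈ T}

/-- The set of equational consequences of `Γ` over the class of algebras `K`. -/
def CnK {L : Signature} (K : Set (Alg L)) (Γ : Set (KFm L 2)) : Set (KFm L 2) :=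
  {e | EqCons K Γ e}

/-- The set of consequences of `Γ` in a deductive system. -/
def CnD {L : Signature} {k : ℕ} (D : DedSys L k) (Γ : Set (KFm L k)) : Set (KFm L k) :=
  {φ | D.turn Γ φ}

/-!
A deductive system is complete for its own models: for a set `Γ`, the Lindenbaum matrix
`⟨Fm, Cn(Γ)⟩` is a model, because assignments into the term algebra are exactly substitutions and
`Cn(Γ)` is closed under cut and substitution; and the identity assignment satisfies `Γ`, so every
formula valid in it relative to `Γ` is derivable from `Γ`. Hence `⊢_L ⊆ ⊢_{L'}` can be read off
the inclusion `Mod(L') ⊆ Mod(L)` through `⊢ = ⊨_{Mod}`.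
-/

namespace FirstOrder.Language.Term

variable {L : Signature} {α : Type}

/-- The term algebra; relation symbols, if any, are interpreted as empty. -/
abbrev termStructure : L.Structure (L.Term α) where
  funMap f ts := func f ts
  RelMap _ _ := False

attribute [local instance] termStructure

theorem realize_var_termStructure (t : L.Term α) : t.realize var = t := by
  induction t with
  | var => rfl
  | func f ts ih => exact congrArg (func f) (funext ih)

theorem subst_var (t : L.Term α) : t.subst var = t := by
  rw [← realize_var_termStructure (t.subst var), realize_subst]
  exact realize_var_termStructure t

theorem realize_termStructure (t : L.Term α) (σ : α → L.Term α) : t.realize σ = t.subst σ := by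
  rw [← realize_var_termStructure (t.subst σ), realize_subst]
  simp only [realize_var_termStructure]

end FirstOrder.Language.Term

namespace DedSys

open Language.Term

attribute [local instance] termStructure

variable {L : Signature} {k : ℕ} (D : DedSys L k)

def lindenbaum (Γ : Set (KFm L k)) : KStr L k :=
  haveI : Nonempty (L.Term ℕ) := ⟨var 0⟩
  { carrier := L.Term ℕ, filter := {ψ | D.turn Γ ψ} }

theorem lindenbaum_holds_iff (Γ : Set (KFm L k)) (σ : ℕ → L.Term ℕ) (φ : KFm L k) :
    (D.lindenbaum Γ).holds σ φ ↔ D.turn Γ (substK σ φ) := by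
  show D.turn Γ (fun i => (φ i).realize σ) ↔ _
  rw [funext fun i => realize_termStructure (φ i) σ]
  rfl

theorem lindenbaum_mem_KMod (Γ : Set (KFm L k)) : D.lindenbaum Γ ∈ KMod D := by
  intro Δ φ hΔφ σ hσΔ
  refine (D.lindenbaum_holds_iff Γ σ φ).mpr (D.cut _ Γ _ (D.subst_invariant Δ φ σ hΔφ) ?_)
  rintro _ ⟨δ, hδ, rfl⟩
  exact (D.lindenbaum_holds_iff Γ σ δ).mp (hσΔ δ hδ)

theorem turn_of_lindenbaum_sat {Γ : Set (KFm L k)} {φ : KFm L k}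
    (h : (D.lindenbaum Γ).Sat Γ φ) : D.turn Γ φ := by
  have substK_var (ψ : KFm L k) : substK var ψ = ψ := funext fun i => subst_var (ψ i)
  have hΓ : ∀ ψ ∈ Γ, (D.lindenbaum Γ).holds var ψ := fun ψ hψ => by
    rw [lindenbaum_holds_iff, substK_var]
    exact D.mem_turn Γ ψ hψ
  simpa only [lindenbaum_holds_iff, substK_var] using h var hΓ

theorem turn_iff_semCons_KMod (Γ : Set (KFm L k)) (φ : KFm L k) :
    D.turn Γ φ ↔ SemCons (KMod D) Γ φ :=
  ⟨fun h _ hA => hA Γ φ h, fun h => D.turn_of_lindenbaum_sat (h _ (D.lindenbaum_mem_KMod Γ))⟩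

end DedSys

theorem refinement_iff_model_class_inclusion_general {L : Signature}
    {k : ℕ} (D D' : DedSys L k) :
    (∀ (Γ : Set (KFm L k)) (φ : KFm L k), D.turn Γ φ → D'.turn Γ φ) ↔
      KMod D' ⊆ KMod D := by
  constructor
  · intro hrefines A hA Γ φ hD
    exact hA Γ φ (hrefines Γ φ hD)
  · intro hmodels Γ φ hD
    rw [DedSys.turn_iff_semCons_KMod] at hD ⊢
    exact fun A hA => hD A (hmodels hA)

/-- `L ⇝ L'` iff `Mod(L') ⊆ Mod(L)`. -/
theorem refinement_iff_model_class_inclusion {L : Signature} (_hL : L.IsAlgebraic)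
    {k : ℕ} (D D' : DedSys L k) :
    (∀ (Γ : Set (KFm L k)) (φ : KFm L k), D.turn Γ φ → D'.turn Γ φ) ↔
      KMod D' ⊆ KMod D :=
  refinement_iff_model_class_inclusion_general D D'
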